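/- arXiv:math/0411101 — 6 statements merged into one kernel-verified Lean document; each statement's English description precedes it below -/
import Mathlib

section
/- Let Q̃ be the quiver obtained from Q by adding a new vertex ∞ and n_i arrows from i to ∞ for each i ∈ I, with dimension vector d̃ = d + 1·∞ and slope function μ(e) = −e_∞ / (∑_{i∈I} e_i + e_∞) on nonzero dimension vectors ≤ d̃. Then a representation X of Q̃ of dimension vector d̃, viewed as a pair (M, f : M → V), is semistable (μ(Y) ≤ μ(X) for all nonzero proper subrepresentations Y) if and only if it is stable (strict inequality) if and only if no nonzero subrepresentation U of M is contained in Ker f. -/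
/-!
A subrepresentation `(U, W)` of `X = (M, f)` has `W = 0` or `W = k`. If `W = 0`, then `U` lies
in `Ker f` and has slope `0`, above the negative slope `-1/(dim M + 1)` of `X`. If `W = k`, its
slope is `-1/(dim U + 1)`, which is strictly below that of `X` exactly when `U ≠ M`. So the
subrepresentations that could violate (semi)stability are precisely the `(U, 0)` with
`0 ≠ U ⊆ Ker f`, and these violate both conditions at once.
-/

open Module

noncomputable section

variable {k : Type*} [Field k] {I : Type*} [Fintype I] {arr : I → I → Type}
  {M : I → Type*} [∀ i, AddCommGroup (M i)] [∀ i, Module k (M i)]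
  (Mmap : ∀ i j, arr i j → (M i →ₗ[k] M j)) {n : I → ℕ} (f : ∀ i, M i →ₗ[k] (Fin (n i) → k))

def subrepSlope (U : ∀ i, Submodule k (M i)) (W : Submodule k k) : ℚ :=
  -(finrank k W : ℚ) / ((∑ i, (finrank k (U i) : ℚ)) + finrank k W)

variable (k M) in
def totalSlope : ℚ := -1 / ((∑ i, (finrank k (M i) : ℚ)) + 1)

/-- Semistability for `r = (· ≤ ·)`, stability for `r = (· < ·)`. -/
def SlopeCondition (r : ℚ → ℚ → Prop) : Prop :=
  ∀ (U : ∀ i, Submodule k (M i)) (W : Submodule k k),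
    (∀ i j (a : arr i j), (U i).map (Mmap i j a) ≤ U j) →
    (∀ i, ∀ x ∈ U i, ∀ l : Fin (n i), f i x l ∈ W) →
    ¬ ((∀ i, U i = ⊥) ∧ W = ⊥) → ¬ ((∀ i, U i = ⊤) ∧ W = ⊤) →
    r (subrepSlope U W) (totalSlope k M)

def NoSubrepInKer : Prop :=
  ∀ U : ∀ i, Submodule k (M i),
    (∀ i j (a : arr i j), (U i).map (Mmap i j a) ≤ U j) →
    (∀ i, U i ≤ LinearMap.ker (f i)) →
    ∀ i, U i = ⊥

omit [Fintype I] in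
lemma coords_mem_bot_iff_le_ker (U : ∀ i, Submodule k (M i)) :
    (∀ i, ∀ x ∈ U i, ∀ l : Fin (n i), f i x l ∈ (⊥ : Submodule k k)) ↔
      ∀ i, U i ≤ LinearMap.ker (f i) := by
  simp only [Submodule.mem_bot, SetLike.le_def, LinearMap.mem_ker, funext_iff]
  rfl

lemma totalSlope_neg : totalSlope k M < 0 :=
  div_neg_of_neg_of_pos (by norm_num) (by positivity)

lemma subrepSlope_bot (U : ∀ i, Submodule k (M i)) : subrepSlope U ⊥ = 0 := by
  simp [subrepSlope]

lemma subrepSlope_top_lt_totalSlope [∀ i, FiniteDimensional k (M i)]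
    (U : ∀ i, Submodule k (M i)) (hU : ∃ i, U i ≠ ⊤) :
    subrepSlope U ⊤ < totalSlope k M := by
  obtain ⟨i₀, hi₀⟩ := hU
  have hlt : ∑ i, finrank k (U i) < ∑ i, finrank k (M i) :=
    Finset.sum_lt_sum (fun i _ ↦ Submodule.finrank_le (U i))
      ⟨i₀, Finset.mem_univ _, Submodule.finrank_lt hi₀⟩
  have hltℚ : ∑ i, (finrank k (U i) : ℚ) + 1 < ∑ i, (finrank k (M i) : ℚ) + 1 := by
    exact_mod_cast Nat.add_lt_add_right hlt 1
  rw [subrepSlope, totalSlope, finrank_top, finrank_self, Nat.cast_one, neg_div, neg_div,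
    neg_lt_neg_iff]
  exact one_div_lt_one_div_of_lt (by positivity) hltℚ

variable {Mmap f}

lemma SlopeCondition.of_lt (h : SlopeCondition Mmap f (· < ·)) :
    SlopeCondition Mmap f (· ≤ ·) :=
  fun U W hcl hf hne hpr ↦ (h U W hcl hf hne hpr).le

lemma SlopeCondition.noSubrepInKer (h : SlopeCondition Mmap f (· ≤ ·)) :
    NoSubrepInKer Mmap f := by
  intro U hcl hker
  by_contra hU
  have hslope := h U ⊥ hcl ((coords_mem_bot_iff_le_ker f U).2 hker)
    (fun hbot ↦ hU hbot.1) (fun htop ↦ bot_ne_top htop.2)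
  rw [subrepSlope_bot] at hslope
  exact (totalSlope_neg (k := k) (M := M)).not_ge hslope

lemma NoSubrepInKer.slopeCondition_lt [∀ i, FiniteDimensional k (M i)]
    (h : NoSubrepInKer Mmap f) : SlopeCondition Mmap f (· < ·) := by
  intro U W hcl hf hne hpr
  rcases Ideal.eq_bot_or_top W with rfl | rfl
  · exact absurd ⟨h U hcl ((coords_mem_bot_iff_le_ker f U).1 hf), rfl⟩ hne
  · have hU : ∃ i, U i ≠ ⊤ := by
      by_contra! hU
      exact hpr ⟨hU, rfl⟩
    exact subrepSlope_top_lt_totalSlope U hU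

end

theorem stmt_3_general {k : Type*} [Field k] {I : Type*} [Fintype I]
    (arr : I → I → Type)
    (M : I → Type*) [∀ i, AddCommGroup (M i)] [∀ i, Module k (M i)]
    [∀ i, FiniteDimensional k (M i)]
    (Mmap : ∀ i j, arr i j → (M i →ₗ[k] M j))
    (n : I → ℕ) (f : ∀ i, M i →ₗ[k] (Fin (n i) → k)) :
    -- semistable ↔ stable
    ((∀ (U : ∀ i, Submodule k (M i)) (W : Submodule k k),
        (∀ i j (a : arr i j), (U i).map (Mmap i j a) ≤ U j) →
        (∀ i, ∀ x ∈ U i, ∀ l : Fin (n i), f i x l ∈ W) →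
        ¬ ((∀ i, U i = ⊥) ∧ W = ⊥) → ¬ ((∀ i, U i = ⊤) ∧ W = ⊤) →
        -(Module.finrank k W : ℚ) /
            ((∑ i, (Module.finrank k (U i) : ℚ)) + (Module.finrank k W : ℚ))
          ≤ -1 / ((∑ i, (Module.finrank k (M i) : ℚ)) + 1)) ↔
      (∀ (U : ∀ i, Submodule k (M i)) (W : Submodule k k),
        (∀ i j (a : arr i j), (U i).map (Mmap i j a) ≤ U j) →
        (∀ i, ∀ x ∈ U i, ∀ l : Fin (n i), f i x l ∈ W) →
        ¬ ((∀ i, U i = ⊥) ∧ W = ⊥) → ¬ ((∀ i, U i = ⊤) ∧ W = ⊤) →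
        -(Module.finrank k W : ℚ) /
            ((∑ i, (Module.finrank k (U i) : ℚ)) + (Module.finrank k W : ℚ))
          < -1 / ((∑ i, (Module.finrank k (M i) : ℚ)) + 1))) ∧
    -- stable ↔ no nonzero subrepresentation of M contained in Ker f
    ((∀ (U : ∀ i, Submodule k (M i)) (W : Submodule k k),
        (∀ i j (a : arr i j), (U i).map (Mmap i j a) ≤ U j) →
        (∀ i, ∀ x ∈ U i, ∀ l : Fin (n i), f i x l ∈ W) →
        ¬ ((∀ i, U i = ⊥) ∧ W = ⊥) → ¬ ((∀ i, U i = ⊤) ∧ W = ⊤) →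
        -(Module.finrank k W : ℚ) /
            ((∑ i, (Module.finrank k (U i) : ℚ)) + (Module.finrank k W : ℚ))
          < -1 / ((∑ i, (Module.finrank k (M i) : ℚ)) + 1)) ↔
      (∀ U : ∀ i, Submodule k (M i),
        (∀ i j (a : arr i j), (U i).map (Mmap i j a) ≤ U j) →
        (∀ i, U i ≤ LinearMap.ker (f i)) →
        ∀ i, U i = ⊥)) := by
  show (SlopeCondition Mmap f (· ≤ ·) ↔ SlopeCondition Mmap f (· < ·)) ∧
    (SlopeCondition Mmap f (· < ·) ↔ NoSubrepInKer Mmap f)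
  exact ⟨⟨fun h ↦ h.noSubrepInKer.slopeCondition_lt, SlopeCondition.of_lt⟩,
    ⟨fun h ↦ h.of_lt.noSubrepInKer, NoSubrepInKer.slopeCondition_lt⟩⟩

/-- for the extended quiver `Q̃` (new vertex `∞`, `n_i` arrows `i → ∞`),
a representation `X` of dimension vector `d̃ = d + ∞`, viewed as a pair `(M, f : M → V)`
with `V_i = k^{n_i}`, is semistable for the slope `μ(e) = −e_∞/(∑_i e_i + e_∞)`
iff it is stable iff no nonzero subrepresentation `U` of `M` is contained in `Ker f`.
A subrepresentation of `X` is a pair `(U, W)` of a graded subspace `U` of `M` closed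
under the arrow maps and a subspace `W ⊆ k` such that all coordinates of `f` map `U`
into `W` (these coordinates are the maps along the added arrows `i → ∞`). -/
theorem stmt_3 {k : Type*} [Field k] {I : Type*} [Fintype I]
    (arr : I → I → Type) (ρ : I → ℕ) (hρ : ∀ i j, arr i j → ρ i < ρ j)
    (M : I → Type*) [∀ i, AddCommGroup (M i)] [∀ i, Module k (M i)]
    [∀ i, FiniteDimensional k (M i)]
    (Mmap : ∀ i j, arr i j → (M i →ₗ[k] M j))
    (n : I → ℕ) (f : ∀ i, M i →ₗ[k] (Fin (n i) → k)) :
    -- semistable ↔ stable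
    ((∀ (U : ∀ i, Submodule k (M i)) (W : Submodule k k),
        (∀ i j (a : arr i j), (U i).map (Mmap i j a) ≤ U j) →
        (∀ i, ∀ x ∈ U i, ∀ l : Fin (n i), f i x l ∈ W) →
        ¬ ((∀ i, U i = ⊥) ∧ W = ⊥) → ¬ ((∀ i, U i = ⊤) ∧ W = ⊤) →
        -(Module.finrank k W : ℚ) /
            ((∑ i, (Module.finrank k (U i) : ℚ)) + (Module.finrank k W : ℚ))
          ≤ -1 / ((∑ i, (Module.finrank k (M i) : ℚ)) + 1)) ↔
      (∀ (U : ∀ i, Submodule k (M i)) (W : Submodule k k),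
        (∀ i j (a : arr i j), (U i).map (Mmap i j a) ≤ U j) →
        (∀ i, ∀ x ∈ U i, ∀ l : Fin (n i), f i x l ∈ W) →
        ¬ ((∀ i, U i = ⊥) ∧ W = ⊥) → ¬ ((∀ i, U i = ⊤) ∧ W = ⊤) →
        -(Module.finrank k W : ℚ) /
            ((∑ i, (Module.finrank k (U i) : ℚ)) + (Module.finrank k W : ℚ))
          < -1 / ((∑ i, (Module.finrank k (M i) : ℚ)) + 1))) ∧
    -- stable ↔ no nonzero subrepresentation of M contained in Ker f
    ((∀ (U : ∀ i, Submodule k (M i)) (W : Submodule k k),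
        (∀ i j (a : arr i j), (U i).map (Mmap i j a) ≤ U j) →
        (∀ i, ∀ x ∈ U i, ∀ l : Fin (n i), f i x l ∈ W) →
        ¬ ((∀ i, U i = ⊥) ∧ W = ⊥) → ¬ ((∀ i, U i = ⊤) ∧ W = ⊤) →
        -(Module.finrank k W : ℚ) /
            ((∑ i, (Module.finrank k (U i) : ℚ)) + (Module.finrank k W : ℚ))
          < -1 / ((∑ i, (Module.finrank k (M i) : ℚ)) + 1)) ↔
      (∀ U : ∀ i, Submodule k (M i),
        (∀ i j (a : arr i j), (U i).map (Mmap i j a) ≤ U j) →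
        (∀ i, U i ≤ LinearMap.ker (f i)) →
        ∀ i, U i = ⊥)) :=
  stmt_3_general arr M Mmap n f
end

section
/- Let M be a representation of a quiver Q without oriented cycles, V an I-graded vector space, and f : M → V an I-graded linear map. Define Φ = (φ_i) recursively by φ_i = f_i ⊕ ⊕_{α:i→k} φ_k ∘ M_α : M_i → ⊕_{paths i⇝j} V_j. Then Ker Φ = (Ker φ_i)_{i∈I} is a subrepresentation of M, and it is the maximal subrepresentation of M contained in Ker f. -/
/-- let `Q` be a quiver without oriented cycles (witnessed by a rank
function `ρ` increasing along arrows), `M` a representation, `f : M → V` an `I`-graded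
linear map, and `Φ = (φ_i)` the recursively defined map
`φ_i = f_i ⊕ ⊕_{α:i→j} φ_j ∘ M_α`; its kernels `K i = Ker φ_i` are characterized by
`K i = Ker f_i ⊓ ⨅_{α:i→j} M_α⁻¹(K j)`. Then `K` is a subrepresentation of `M`
contained in `Ker f`, and it is the maximal such subrepresentation. -/
theorem stmt_5 {k : Type*} [Field k] {I : Type*} [Fintype I]
    (arr : I → I → Type) (ρ : I → ℕ) (hρ : ∀ i j, arr i j → ρ i < ρ j)
    (M : I → Type*) [∀ i, AddCommGroup (M i)] [∀ i, Module k (M i)]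
    (V : I → Type*) [∀ i, AddCommGroup (V i)] [∀ i, Module k (V i)]
    (Mmap : ∀ i j, arr i j → (M i →ₗ[k] M j))
    (f : ∀ i, M i →ₗ[k] V i)
    (K : ∀ i, Submodule k (M i))
    (hK : ∀ i, K i = LinearMap.ker (f i) ⊓
      ⨅ (j : I), ⨅ (a : arr i j), (K j).comap (Mmap i j a)) :
    (∀ i j (a : arr i j), (K i).map (Mmap i j a) ≤ K j) ∧
    (∀ i, K i ≤ LinearMap.ker (f i)) ∧
    (∀ U : ∀ i, Submodule k (M i),
      (∀ i j (a : arr i j), (U i).map (Mmap i j a) ≤ U j) →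
      (∀ i, U i ≤ LinearMap.ker (f i)) →
      ∀ i, U i ≤ K i) := by
  refine ⟨?_, ?_, ?_⟩
  · intro i j a
    rw [Submodule.map_le_iff_le_comap, hK i]
    exact le_trans inf_le_right (le_trans (iInf_le _ j) (iInf_le _ a))
  · intro i; rw [hK i]; exact inf_le_left
  · intro U hU hUf
    have key : ∀ n i, Finset.univ.sup ρ - ρ i < n → U i ≤ K i := by
      intro n
      induction n with
      | zero => intro i h; omega
      | succ n ih =>
        intro i hi
        rw [hK i]
        refine le_inf (hUf i) (le_iInf fun j => le_iInf fun a => ?_)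
        have hj : U j ≤ K j := by
          apply ih
          have h1 := hρ i j a
          have h2 : ρ j ≤ Finset.univ.sup ρ := Finset.le_sup (Finset.mem_univ j)
          omega
        exact fun x hx => hj (hU i j a ⟨x, hx, rfl⟩)
    intro i
    exact key _ i (Nat.lt_succ_self _)
end

section
/- Let M be a representation of Q (no oriented cycles) of dimension vector d, and n : I → ℕ. There exists an I-graded linear map f : M → V (with dim V_i = n_i) such that the pair (M, f) is stable if and only if n_i ≥ dim Hom_Q(E_i, M) for all i ∈ I. -/
/-- Auxiliary: if a subspace `K` of a finite-dimensional space `V` has dimension at most `n`,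
there is a linear map `V →ₗ (Fin n → k)` whose kernel meets `K` trivially. -/
theorem stmt_8_aux {k : Type*} [Field k] {V : Type*} [AddCommGroup V] [Module k V]
    [FiniteDimensional k V] (K : Submodule k V) (n : ℕ)
    (h : Module.finrank k K ≤ n) :
    ∃ f : V →ₗ[k] (Fin n → k), K ⊓ LinearMap.ker f = ⊥ := by
  classical
  obtain ⟨W, hW⟩ := Submodule.exists_isCompl K
  set d := Module.finrank k K with hd
  let π : V →ₗ[k] K := K.linearProjOfIsCompl W hW
  let e : K ≃ₗ[k] (Fin d → k) := (Module.finBasis k K).equivFun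
  let ext : (Fin d → k) →ₗ[k] (Fin n → k) :=
    LinearMap.pi fun j => if hj : (j : ℕ) < d then LinearMap.proj (⟨j, hj⟩ : Fin d) else 0
  have hext : Function.Injective ext := by
    rw [injective_iff_map_eq_zero]
    intro v hv
    funext j
    have := congrFun hv (Fin.castLE h j)
    simpa [ext, LinearMap.pi_apply, (Fin.castLE h j).isLt, Fin.is_lt j] using this
  refine ⟨ext ∘ₗ e.toLinearMap ∘ₗ π, ?_⟩
  rw [eq_bot_iff]
  rintro x ⟨hxK, hxker⟩
  have hπ : π x = ⟨x, hxK⟩ := Submodule.linearProjOfIsCompl_apply_left hW ⟨x, hxK⟩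
  have : ext (e (π x)) = 0 := hxker
  have h0 : e (π x) = 0 := hext (by simpa using this)
  have : π x = 0 := by
    have := congrArg e.symm h0
    simpa using this
  rw [hπ] at this
  have : (⟨x, hxK⟩ : K) = (0 : K) := this
  simpa using congrArg (Subtype.val) this

/-- for a representation `M` of an acyclic quiver `Q` and `n : I → ℕ`,
there exists an `I`-graded linear map `f : M → V` with `dim V_i = n_i` making the
pair `(M,f)` stable (no nonzero subrepresentation of `M` lies in `Ker f`) iff
`n_i ≥ dim Hom_Q(E_i,M)` for all `i`, where `Hom_Q(E_i,M)` is identified with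
`Ker(⊕_{α:i→j} M_α)`. -/
theorem stmt_8 {k : Type*} [Field k] {I : Type*} [Fintype I]
    (arr : I → I → Type) (ρ : I → ℕ) (hρ : ∀ i j, arr i j → ρ i < ρ j)
    (M : I → Type*) [∀ i, AddCommGroup (M i)] [∀ i, Module k (M i)]
    [∀ i, FiniteDimensional k (M i)]
    (Mmap : ∀ i j, arr i j → (M i →ₗ[k] M j))
    (n : I → ℕ) :
    (∃ f : ∀ i, M i →ₗ[k] (Fin (n i) → k),
      ∀ U : ∀ i, Submodule k (M i),
        (∀ i j (a : arr i j), (U i).map (Mmap i j a) ≤ U j) →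
        (∀ i, U i ≤ LinearMap.ker (f i)) →
        ∀ i, U i = ⊥) ↔
    (∀ i, Module.finrank k
        ↥(⨅ (j : I), ⨅ (a : arr i j), LinearMap.ker (Mmap i j a)) ≤ n i) := by
  classical
  set K : ∀ i, Submodule k (M i) :=
    fun i => ⨅ (j : I), ⨅ (a : arr i j), LinearMap.ker (Mmap i j a) with hKdef
  constructor
  · rintro ⟨f, hf⟩ i
    -- the candidate subrepresentation
    set U : ∀ j, Submodule k (M j) := fun j => K j ⊓ LinearMap.ker (f j) with hU
    have hsub : ∀ a b (c : arr a b), (U a).map (Mmap a b c) ≤ U b := by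
      intro a b c
      rintro _ ⟨x, hx, rfl⟩
      have hxK : x ∈ K a := hx.1
      have : x ∈ LinearMap.ker (Mmap a b c) :=
        (iInf_le_of_le b (iInf_le _ c) : K a ≤ _) hxK
      have h0 : Mmap a b c x = 0 := this
      rw [h0]
      exact (U b).zero_mem
    have hker : ∀ j, U j ≤ LinearMap.ker (f j) := fun j => inf_le_right
    have hUbot : U i = ⊥ := hf U hsub hker i
    -- so `f i` is injective on `K i`
    have hinj : Function.Injective ((f i).comp (K i).subtype) := by
      rw [← LinearMap.ker_eq_bot, eq_bot_iff]
      rintro ⟨x, hxK⟩ hx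
      have hx' : f i x = 0 := hx
      have : x ∈ U i := ⟨hxK, hx'⟩
      rw [hUbot, Submodule.mem_bot] at this
      exact (Submodule.mem_bot _).mpr (Subtype.ext this)
    have := LinearMap.finrank_le_finrank_of_injective hinj
    simpa using this
  · intro hn
    choose f hfK using fun i => stmt_8_aux (K i) (n i) (hn i)
    refine ⟨f, ?_⟩
    intro U hsub hker
    by_contra hc
    push_neg at hc
    obtain ⟨i0, hi0⟩ := hc
    set S : Finset I := Finset.univ.filter (fun j => U j ≠ ⊥) with hS
    have hSne : S.Nonempty := ⟨i0, by simp [hS, hi0]⟩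
    obtain ⟨i, hiS, hmax⟩ := S.exists_max_image ρ hSne
    have hUi : U i ≠ ⊥ := by simpa [hS] using hiS
    have hUK : U i ≤ K i := by
      refine le_iInf fun j => le_iInf fun a => ?_
      intro x hx
      have hj : U j = ⊥ := by
        by_contra hj
        have : j ∈ S := by simp [hS, hj]
        exact absurd (hρ i j a) (not_lt.mpr (hmax j this))
      have : Mmap i j a x ∈ U j := hsub i j a ⟨x, hx, rfl⟩
      rw [hj, Submodule.mem_bot] at this
      exact this
    have : U i ≤ ⊥ := by
      rw [← hfK i]
      exact le_inf hUK (hker i)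
    exact hUi (le_bot_iff.mp this)
end

section
/- For any dimension vector d : I → ℕ over an infinite (or algebraically closed) field, there exists a representation M of Q of dimension vector d such that dim Hom_Q(E_i, M) = max(0, ⟨i,d⟩) for every vertex i, i.e. such that the map ⊕_{α:i→j} M_α : M_i → ⊕_{α:i→j} M_j has maximal possible rank min(d_i, ∑_{α:i→j} d_j) for all i. -/
/-- For any `n N`, there is a linear map `k^n → k^N` of maximal rank, i.e. whose
kernel has dimension `n - N` (truncated subtraction). -/
lemma aux_exists_maxrank (k : Type*) [Field k] (n N : ℕ) :
    ∃ L : (Fin n → k) →ₗ[k] (Fin N → k),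
      Module.finrank k ↥(LinearMap.ker L) = n - N := by
  rcases le_or_gt n N with h | h
  · -- injective map
    rcases Nat.eq_zero_or_pos n with hn | hn
    · refine ⟨0, ?_⟩
      subst hn
      rw [LinearMap.ker_zero, finrank_top]
      simp
    · set f : Fin N → Fin n := fun j => ⟨j % n, Nat.mod_lt _ hn⟩ with hf
      have hfs : Function.Surjective f := by
        intro i
        exact ⟨Fin.castLE h i, by simp [hf, Nat.mod_eq_of_lt i.isLt]⟩
      refine ⟨LinearMap.funLeft k k f, ?_⟩
      have hinj := LinearMap.funLeft_injective_of_surjective k k f hfs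
      rw [LinearMap.ker_eq_bot.mpr hinj]
      simp [Nat.sub_eq_zero_of_le h]
  · -- surjective map
    set f : Fin N → Fin n := Fin.castLE h.le with hf
    have hfi : Function.Injective f := Fin.castLE_injective _
    refine ⟨LinearMap.funLeft k k f, ?_⟩
    have hsurj := LinearMap.funLeft_surjective_of_injective k k f hfi
    have hrn := LinearMap.finrank_range_add_finrank_ker (LinearMap.funLeft k k f)
    rw [LinearMap.range_eq_top.mpr hsurj, finrank_top] at hrn
    simp only [Module.finrank_fin_fun] at hrn
    omega

/-- for any dimension vector `d` over an infinite field, there exists a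
representation `M` of `Q` (acyclic) of dimension vector `d` (with `M_i = k^{d_i}`) such
that for every vertex `i` the combined map `⊕_{α:i→j} M_α : M_i → ⊕_{α:i→j} M_j` has
maximal rank, i.e. its kernel has dimension `max(0, d_i − ∑_{α:i→j} d_j)`
(`= d_i − ∑_{α:i→j} d_j` in truncated natural subtraction), so that
`dim Hom_Q(E_i,M) = max(0, ⟨i,d⟩)`. -/
theorem stmt_10 {k : Type*} [Field k] [Infinite k] {I : Type*} [Fintype I] [DecidableEq I]
    (arr : I → I → Type) [∀ i j, Fintype (arr i j)]
    (ρ : I → ℕ) (hρ : ∀ i j, arr i j → ρ i < ρ j)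
    (d : I → ℕ) :
    ∃ Mmap : ∀ i j, arr i j → ((Fin (d i) → k) →ₗ[k] (Fin (d j) → k)),
      ∀ i, Module.finrank k
          ↥(LinearMap.ker (LinearMap.pi (fun p : Σ j, arr i j => Mmap i p.1 p.2)))
        = d i - ∑ p : Σ j, arr i j, d p.1 := by
  -- for each vertex choose a maximal rank map into k^N
  have key : ∀ i : I, ∃ G : (Fin (d i) → k) →ₗ[k] (∀ p : Σ j, arr i j, Fin (d p.1) → k),
      Module.finrank k ↥(LinearMap.ker G) = d i - ∑ p : Σ j, arr i j, d p.1 := by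
    intro i
    obtain ⟨L, hL⟩ := aux_exists_maxrank k (d i) (∑ p : Σ j, arr i j, d p.1)
    have hfr : Module.finrank k (Fin (∑ p : Σ j, arr i j, d p.1) → k)
        = Module.finrank k (∀ p : Σ j, arr i j, Fin (d p.1) → k) := by
      simp [Module.finrank_pi_fintype]
    obtain ⟨e⟩ := FiniteDimensional.nonempty_linearEquiv_of_finrank_eq hfr
    refine ⟨(e : (Fin (∑ p : Σ j, arr i j, d p.1) → k) →ₗ[k] _).comp L, ?_⟩
    rw [LinearEquiv.ker_comp]
    exact hL
  choose G hG using key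
  refine ⟨fun i j α => (LinearMap.proj (⟨j, α⟩ : Σ j, arr i j)).comp (G i), fun i => ?_⟩
  have : (LinearMap.pi (fun p : Σ j, arr i j =>
      (LinearMap.proj p).comp (G i))) = G i := by
    ext x p
    simp [LinearMap.pi_apply]
  rw [this]
  exact hG i
end

section
/- The framed quiver moduli space M_{d,n} is nonempty if and only if n_i ≥ ⟨i,d⟩ for all i ∈ I, where ⟨i,d⟩ = d_i − ∑_{α:i→j} d_j. Equivalently: there exists a stable pair (M, f) with M of dimension vector d and f : M → V (dim V_i = n_i) if and only if n_i ≥ d_i − ∑_{α:i→j} d_j for all i. -/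
/-- Padding a vector of length `m` with zeros to length `N`. -/
def padLin (k : Type*) [Field k] (m N : ℕ) : (Fin m → k) →ₗ[k] (Fin N → k) where
  toFun x := fun j => if hj : (j : ℕ) < m then x ⟨j, hj⟩ else 0
  map_add' x y := by funext j; by_cases hj : (j : ℕ) < m <;> simp [hj]
  map_smul' c x := by funext j; by_cases hj : (j : ℕ) < m <;> simp [hj]

lemma padLin_inj (k : Type*) [Field k] {m N : ℕ} (h : m ≤ N) :
    Function.Injective (padLin k m N) := by
  intro x y hxy
  funext i
  have := congrFun hxy ⟨i, lt_of_lt_of_le i.2 h⟩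
  simpa [padLin, i.2] using this

/-- the framed quiver moduli space `M_{d,n}` is nonempty — i.e. there
exists a stable pair `(M, f)` with `M` a representation of the acyclic quiver `Q` of
dimension vector `d` (`M_i = k^{d_i}`) and `f : M → V`, `dim V_i = n_i`, such that no
nonzero subrepresentation of `M` is contained in `Ker f` — iff `n_i ≥ ⟨i,d⟩ =
d_i − ∑_{α:i→j} d_j` for all `i ∈ I`. -/
theorem stmt_11 {k : Type*} [Field k] [Infinite k] {I : Type*} [Fintype I] [DecidableEq I]
    (arr : I → I → Type) [∀ i j, Fintype (arr i j)]
    (ρ : I → ℕ) (hρ : ∀ i j, arr i j → ρ i < ρ j)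
    (d n : I → ℕ) :
    (∃ (Mmap : ∀ i j, arr i j → ((Fin (d i) → k) →ₗ[k] (Fin (d j) → k)))
       (f : ∀ i, (Fin (d i) → k) →ₗ[k] (Fin (n i) → k)),
      ∀ U : ∀ i, Submodule k (Fin (d i) → k),
        (∀ i j (a : arr i j), (U i).map (Mmap i j a) ≤ U j) →
        (∀ i, U i ≤ LinearMap.ker (f i)) →
        ∀ i, U i = ⊥) ↔
    (∀ i, (d i : ℤ) - ∑ p : Σ j, arr i j, (d p.1 : ℤ) ≤ (n i : ℤ)) := by
  constructor
  · rintro ⟨Mmap, f, hst⟩ i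
    -- combined map at vertex i
    let L : (Fin (d i) → k) →ₗ[k]
        ((Fin (n i) → k) × (∀ p : Σ j, arr i j, Fin (d p.1) → k)) :=
      LinearMap.prod (f i) (LinearMap.pi fun p => Mmap i p.1 p.2)
    -- the subrepresentation concentrated at i
    let U : ∀ i', Submodule k (Fin (d i') → k) := fun i' =>
      if i' = i then
        LinearMap.ker (f i') ⊓ ⨅ p : Σ j, arr i' j, LinearMap.ker (Mmap i' p.1 p.2)
      else ⊥
    have hUsub : ∀ i₁ j (a : arr i₁ j), (U i₁).map (Mmap i₁ j a) ≤ U j := by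
      intro i₁ j a
      by_cases h1 : i₁ = i
      · subst h1
        have hji : j ≠ i₁ := by intro h; subst h; exact absurd (hρ j j a) (lt_irrefl _)
        simp only [U, if_pos rfl, if_neg hji]
        rintro y ⟨x, hx, rfl⟩
        have hm : x ∈ LinearMap.ker (Mmap i₁ j a) :=
          (iInf_le (fun p : Σ j', arr i₁ j' => LinearMap.ker (Mmap i₁ p.1 p.2))
            (⟨j, a⟩ : Σ j', arr i₁ j')) hx.2
        simpa using hm
      · simp only [U, if_neg h1, Submodule.map_bot]
        exact bot_le
    have hUker : ∀ i', U i' ≤ LinearMap.ker (f i') := by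
      intro i'
      by_cases h1 : i' = i
      · simp only [U, if_pos h1]; exact inf_le_left
      · simp only [U, if_neg h1]; exact bot_le
    have hUi := hst U hUsub hUker i
    simp only [U, if_pos rfl] at hUi
    have hLinj : Function.Injective L := by
      rw [← LinearMap.ker_eq_bot, LinearMap.ker_prod, LinearMap.ker_pi]
      exact hUi
    have hrank := LinearMap.finrank_le_finrank_of_injective hLinj
    simp only [Module.finrank_pi, Module.finrank_prod, Module.finrank_pi_fintype,
      Fintype.card_fin] at hrank
    have : (d i : ℤ) ≤ (n i : ℤ) + ∑ p : Σ j, arr i j, (d p.1 : ℤ) := by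
      exact_mod_cast hrank
    linarith
  · intro hn
    have hle : ∀ i, d i ≤ n i + ∑ p : Σ j, arr i j, d p.1 := by
      intro i
      have h1 := hn i
      have : (d i : ℤ) ≤ (n i : ℤ) + ∑ p : Σ j, arr i j, (d p.1 : ℤ) := by linarith
      exact_mod_cast this
    -- the combined injective map at each vertex
    have hdN : ∀ i, d i ≤ Module.finrank k
        ((Fin (n i) → k) × (∀ p : Σ j, arr i j, Fin (d p.1) → k)) := by
      intro i
      simp only [Module.finrank_prod, Module.finrank_pi_fintype, Module.finrank_self,
        Finset.sum_const, smul_eq_mul, mul_one, Finset.card_univ, Fintype.card_fin]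
      exact hle i
    let L : ∀ i, (Fin (d i) → k) →ₗ[k]
        ((Fin (n i) → k) × (∀ p : Σ j, arr i j, Fin (d p.1) → k)) := fun i =>
      (Module.finBasis k _).equivFun.symm.toLinearMap ∘ₗ
        padLin k (d i) (Module.finrank k _)
    have hLinj : ∀ i, Function.Injective (L i) := fun i =>
      ((Module.finBasis k _).equivFun.symm.injective).comp (padLin_inj k (hdN i))
    refine ⟨fun i j a => LinearMap.proj (⟨j, a⟩ : Σ j, arr i j) ∘ₗ
        LinearMap.snd k _ _ ∘ₗ L i,
      fun i => LinearMap.fst k _ _ ∘ₗ L i, ?_⟩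
    intro U hU hUf
    set B := (Finset.univ.sup ρ) + 1 with hB
    have hρB : ∀ i, ρ i < B := fun i =>
      Nat.lt_succ_of_le (Finset.le_sup (Finset.mem_univ i))
    have key : ∀ m : ℕ, ∀ i, B ≤ ρ i + m → U i = ⊥ := by
      intro m
      induction m with
      | zero => intro i hi; exact absurd (hρB i) (by omega)
      | succ m ih =>
        intro i hi
        rw [eq_bot_iff]
        intro x hx
        have hx0 : L i x = 0 := by
          have h1 : (L i x).1 = 0 := hUf i hx
          have h2 : (L i x).2 = 0 := by
            funext p
            have hUj : U p.1 = ⊥ := by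
              refine ih p.1 ?_
              have := hρ i p.1 p.2
              omega
            have := hU i p.1 p.2 (Submodule.mem_map_of_mem hx)
            rw [hUj] at this
            exact this
          exact Prod.ext h1 h2
        have : x = 0 := hLinj i (by rw [hx0, map_zero])
        simp [this]
    intro i
    exact key B i (by omega)
end

section
/- Every representation M of a quiver Q without oriented cycles admits an injective coresolution 0 → M → ⊕_{i∈I} I_i ⊗ Hom_Q(E_i,M) → ⊕_{i∈I} I_i ⊗ Ext¹_Q(E_i,M) → 0, where I_i is the injective hull of the simple E_i. -/
universe u v

/-- Paths in a quiver with arrow types `arr i j` (including the empty path). -/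
inductive QPath {I : Type u} (arr : I → I → Type v) : I → I → Type (max u v)
  | nil (i : I) : QPath arr i i
  | cons {i j l : I} (a : arr i j) (p : QPath arr j l) : QPath arr i l

/-- The `j`-th graded component of the injective representation `⊕_i I_i ⊗ V_i`:
`(I_i)_j` has basis the paths `j ⇝ i`, so `(⊕_i I_i ⊗ V_i)_j ≅ ⊕_{paths j⇝i} V_i`. -/
abbrev pathSpace {I : Type*} (arr : I → I → Type) (V : I → Type*) (j : I) : Type _ :=
  ∀ p : Σ i, QPath arr j i, V p.1

/-- The arrow map of the injective representation `⊕_i I_i ⊗ V_i` along `a : j → l`: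
restriction of functions on paths via `p ↦ a·p`. -/
def rmap {k : Type*} [Field k] {I : Type*} {arr : I → I → Type} (V : I → Type*)
    [∀ i, AddCommGroup (V i)] [∀ i, Module k (V i)] {j l : I} (a : arr j l) :
    pathSpace arr V j →ₗ[k] pathSpace arr V l :=
  LinearMap.pi fun p => LinearMap.proj (⟨p.1, QPath.cons a p.2⟩ : Σ i, QPath arr j i)

/-- The combined map `⊕_{α:i→j} M_α : M_i → ⊕_{α:i→j} M_j`, whose kernel is
`Hom_Q(E_i, M)` and whose cokernel is `Ext¹_Q(E_i, M)`. -/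
def combMap {k : Type*} [Field k] {I : Type*} {arr : I → I → Type} (M : I → Type*)
    [∀ i, AddCommGroup (M i)] [∀ i, Module k (M i)]
    (Mmap : ∀ i j, arr i j → (M i →ₗ[k] M j)) (i : I) :
    M i →ₗ[k] ∀ p : Σ j, arr i j, M p.1 :=
  LinearMap.pi fun p => Mmap i p.1 p.2

section Aux

variable {k : Type*} [Field k] {I : Type*} {arr : I → I → Type}

/-- Composition of the arrow maps of a representation along a path. -/
def pathMap {M : I → Type} [∀ i, AddCommGroup (M i)] [∀ i, Module k (M i)]
    (Mmap : ∀ i j, arr i j → (M i →ₗ[k] M j)) :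
    ∀ {j i : I}, QPath arr j i → (M j →ₗ[k] M i)
  | _, _, QPath.nil _ => LinearMap.id
  | _, _, QPath.cons a p => (pathMap Mmap p) ∘ₗ Mmap _ _ a

/-- Composition of the maps `rmap` along a path. -/
def rpathMap (V : I → Type) [∀ i, AddCommGroup (V i)] [∀ i, Module k (V i)] :
    ∀ {j i : I}, QPath arr j i → (pathSpace arr V j →ₗ[k] pathSpace arr V i)
  | _, _, QPath.nil _ => LinearMap.id
  | _, _, QPath.cons a p => (rpathMap V p) ∘ₗ rmap V a

/-- Glue a family of elements of the path spaces at the targets of the arrows out of `i`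
to an element of the path space at `i` (with zero component at the empty path). -/
def extendPath {V : I → Type} [∀ i, Zero (V i)] {i : I}
    (u : ∀ p : Σ j', arr i j', pathSpace arr V p.1) : pathSpace arr V i
  | ⟨_, QPath.nil _⟩ => 0
  | ⟨i', QPath.cons a p⟩ => u ⟨_, a⟩ ⟨i', p⟩

end Aux

set_option maxHeartbeats 2000000

/-- every representation `M` of a quiver `Q` without oriented cycles
admits an injective coresolution
`0 → M → ⊕_i I_i ⊗ Hom_Q(E_i,M) → ⊕_i I_i ⊗ Ext¹_Q(E_i,M) → 0`,
where `Hom_Q(E_i,M)` is the kernel and `Ext¹_Q(E_i,M)` the cokernel of the combined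
map `⊕_{α:i→j} M_α`, and `⊕_i I_i ⊗ W_i` is the injective representation with graded
components the path spaces and arrow maps the restrictions `rmap`: there are maps
`ι`, `π` of representations (commuting with the arrow maps) with `ι` injective,
`π` surjective, and `Im ι = Ker π` in every graded component. -/
theorem stmt_18 {k : Type*} [Field k] {I : Type*} [Fintype I]
    {arr : I → I → Type} (ρ : I → ℕ) (hρ : ∀ i j, arr i j → ρ i < ρ j)
    (M : I → Type) [∀ i, AddCommGroup (M i)] [∀ i, Module k (M i)]
    [∀ i, FiniteDimensional k (M i)]
    (Mmap : ∀ i j, arr i j → (M i →ₗ[k] M j)) :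
    ∃ (ι : ∀ j, M j →ₗ[k]
          pathSpace arr (fun i => ↥(LinearMap.ker (combMap M Mmap i))) j)
      (π : ∀ j, pathSpace arr (fun i => ↥(LinearMap.ker (combMap M Mmap i))) j →ₗ[k]
          pathSpace arr
            (fun i => (∀ p : Σ j', arr i j', M p.1) ⧸
              LinearMap.range (combMap M Mmap i)) j),
      (∀ j l (a : arr j l),
        (rmap (fun i => ↥(LinearMap.ker (combMap M Mmap i))) a) ∘ₗ ι j
          = ι l ∘ₗ Mmap j l a) ∧
      (∀ j l (a : arr j l),
        (rmap (fun i => (∀ p : Σ j', arr i j', M p.1) ⧸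
              LinearMap.range (combMap M Mmap i)) a) ∘ₗ π j
          = π l ∘ₗ rmap (fun i => ↥(LinearMap.ker (combMap M Mmap i))) a) ∧
      (∀ j, Function.Injective (ι j)) ∧
      (∀ j, Function.Surjective (π j)) ∧
      (∀ j, LinearMap.range (ι j) = LinearMap.ker (π j)) := by
  classical
  -- choose a linear retraction `f i : M i → ker (combMap i)`
  choose f hf using fun i : I => LinearMap.exists_leftInverse_of_injective
    (LinearMap.ker (combMap M Mmap i)).subtype (Submodule.ker_subtype _)
  -- the first map of the coresolution
  set ι : ∀ j, M j →ₗ[k]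
      pathSpace arr (fun i => ↥(LinearMap.ker (combMap M Mmap i))) j :=
    fun j => LinearMap.pi
      (fun p : Σ i', QPath arr j i' => (f p.1) ∘ₗ pathMap Mmap p.2) with hιdef
  have hcomm1 : ∀ j l (a : arr j l),
      (rmap (k := k) (fun i => ↥(LinearMap.ker (combMap M Mmap i))) a) ∘ₗ ι j
        = ι l ∘ₗ Mmap j l a :=
    fun j l a => LinearMap.ext fun m => funext fun p => rfl
  have hcomm1' : ∀ (j l : I) (a : arr j l) (m : M j),
      (rmap (k := k) (fun i => ↥(LinearMap.ker (combMap M Mmap i))) a) (ι j m)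
        = ι l (Mmap j l a m) :=
    fun j l a m => LinearMap.congr_fun (hcomm1 j l a) m
  set B := Finset.univ.sup ρ with hBdef
  have hρB : ∀ i : I, ρ i ≤ B := fun i => Finset.le_sup (Finset.mem_univ i)
  -- injectivity of ι, by descending induction on ρ
  have key1 : ∀ n (i : I), B + 1 - ρ i ≤ n → ∀ m : M i, ι i m = 0 → m = 0 := by
    intro n
    induction n with
    | zero => intro i hi; exact absurd hi (by have := hρB i; omega)
    | succ n IH =>
      intro i hi m hm
      have h1 : ∀ p : Σ l, arr i l, Mmap i p.1 p.2 m = 0 := by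
        intro p
        refine IH p.1 (by have := hρ i p.1 p.2; have := hρB p.1; omega) _ ?_
        funext q
        exact congrFun hm ⟨q.1, QPath.cons p.2 q.2⟩
      have hmem : m ∈ LinearMap.ker (combMap M Mmap i) :=
        LinearMap.mem_ker.mpr (funext fun p => h1 p)
      have h2 : f i m = 0 := congrFun hm ⟨i, QPath.nil i⟩
      have h4 : (⟨m, hmem⟩ : ↥(LinearMap.ker (combMap M Mmap i))) = 0 := by
        rw [← h2]
        exact (LinearMap.congr_fun (hf i) ⟨m, hmem⟩).symm
      exact congrArg Subtype.val h4
  have hinj : ∀ j, Function.Injective (ι j) := by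
    intro j m m' hmm'
    have := key1 (B + 1) j (Nat.sub_le _ _) (m - m')
      (by rw [map_sub, hmm', sub_self])
    exact sub_eq_zero.mp this
  -- choose a linear retraction of ι
  choose P hP using fun j => LinearMap.exists_leftInverse_of_injective (ι j)
    (LinearMap.ker_eq_bot.mpr (hinj j))
  have hP' : ∀ (j : I) (m : M j), P j (ι j m) = m :=
    fun j m => LinearMap.congr_fun (hP j) m
  -- the second map of the coresolution
  set h : ∀ i : I,
      pathSpace arr (fun i => ↥(LinearMap.ker (combMap M Mmap i))) i →ₗ[k]
      ((∀ p : Σ j', arr i j', M p.1) ⧸ LinearMap.range (combMap M Mmap i)) :=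
    fun i => (LinearMap.range (combMap M Mmap i)).mkQ ∘ₗ
      LinearMap.pi (fun p : Σ j', arr i j' =>
        P p.1 ∘ₗ rmap (k := k) (fun i => ↥(LinearMap.ker (combMap M Mmap i))) p.2) with hhdef
  set π : ∀ j,
      pathSpace arr (fun i => ↥(LinearMap.ker (combMap M Mmap i))) j →ₗ[k]
      pathSpace arr (fun i => (∀ p : Σ j', arr i j', M p.1) ⧸
        LinearMap.range (combMap M Mmap i)) j :=
    fun j => LinearMap.pi (fun p : Σ i', QPath arr j i' =>
      h p.1 ∘ₗ rpathMap (k := k) (fun i => ↥(LinearMap.ker (combMap M Mmap i))) p.2) with hπdef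
  have hcomm2 : ∀ j l (a : arr j l),
      (rmap (k := k) (fun i => (∀ p : Σ j', arr i j', M p.1) ⧸
          LinearMap.range (combMap M Mmap i)) a) ∘ₗ π j
        = π l ∘ₗ rmap (k := k) (fun i => ↥(LinearMap.ker (combMap M Mmap i))) a :=
    fun j l a => LinearMap.ext fun x => funext fun p => rfl
  -- h ∘ ι = 0
  have hhι : ∀ (i : I) (m : M i), h i (ι i m) = 0 := by
    intro i m
    have e1 : (fun p : Σ j', arr i j' =>
        P p.1 ((rmap (k := k) (fun i => ↥(LinearMap.ker (combMap M Mmap i))) p.2) (ι i m)))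
        = combMap M Mmap i m := by
      funext p
      have e2 : (rmap (k := k) (fun i => ↥(LinearMap.ker (combMap M Mmap i))) p.2) (ι i m)
          = ι p.1 (Mmap i p.1 p.2 m) :=
        LinearMap.congr_fun (hcomm1 i p.1 p.2) m
      rw [e2]
      exact hP' p.1 (Mmap i p.1 p.2 m)
    show Submodule.Quotient.mk (fun p : Σ j', arr i j' =>
        P p.1 ((rmap (k := k) (fun i => ↥(LinearMap.ker (combMap M Mmap i))) p.2) (ι i m))) = 0
    rw [e1]
    exact (Submodule.Quotient.mk_eq_zero _).mpr (LinearMap.mem_range_self _ m)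
  -- rpathMap ∘ ι = ι ∘ pathMap
  have hrι : ∀ {j i' : I} (p : QPath arr j i') (m : M j),
      rpathMap (k := k) (fun i => ↥(LinearMap.ker (combMap M Mmap i))) p (ι j m)
        = ι i' (pathMap Mmap p m) := by
    intro j i' p
    induction p with
    | nil i => intro m; rfl
    | @cons j1 j2 j3 a q IH =>
      intro m
      calc rpathMap (k := k) (fun i => ↥(LinearMap.ker (combMap M Mmap i)))
              (QPath.cons a q) (ι j1 m)
          = rpathMap (k := k) (fun i => ↥(LinearMap.ker (combMap M Mmap i))) q
              ((rmap (k := k) (fun i => ↥(LinearMap.ker (combMap M Mmap i))) a) (ι j1 m)) := rfl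
        _ = rpathMap (k := k) (fun i => ↥(LinearMap.ker (combMap M Mmap i))) q
              (ι j2 (Mmap j1 j2 a m)) := by rw [hcomm1' j1 j2 a m]
        _ = ι j3 (pathMap Mmap q (Mmap j1 j2 a m)) := IH _
        _ = ι j3 (pathMap Mmap (QPath.cons a q) m) := rfl
  -- π ∘ ι = 0
  have hπι : ∀ (j : I) (m : M j), π j (ι j m) = 0 := by
    intro j m
    funext p
    show h p.1 (rpathMap (k := k) (fun i => ↥(LinearMap.ker (combMap M Mmap i))) p.2 (ι j m)) = 0
    rw [hrι p.2 m]
    exact hhι _ _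
  -- exactness and surjectivity, by descending induction on ρ
  have key2 : ∀ n (i : I), B + 1 - ρ i ≤ n →
      (∀ x, π i x = 0 → x ∈ LinearMap.range (ι i)) ∧ Function.Surjective (π i) := by
    intro n
    induction n with
    | zero => intro i hi; exact absurd hi (by have := hρB i; omega)
    | succ n IH =>
      intro i hi
      have IH' : ∀ p : Σ j', arr i j',
          (∀ x, π p.1 x = 0 → x ∈ LinearMap.range (ι p.1))
            ∧ Function.Surjective (π p.1) :=
        fun p => IH p.1 (by have := hρ i p.1 p.2; have := hρB p.1; omega)
      constructor
      · -- ker π ⊆ range ι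
        intro x hx
        have hx1 : ∀ p : Σ j', arr i j',
            π p.1 ((rmap (k := k) (fun i => ↥(LinearMap.ker (combMap M Mmap i))) p.2) x) = 0 := by
          intro p
          funext q
          exact congrFun hx ⟨q.1, QPath.cons p.2 q.2⟩
        have hx3 : ∀ p : Σ j', arr i j',
            ι p.1 (P p.1 ((rmap (k := k) (fun i => ↥(LinearMap.ker (combMap M Mmap i))) p.2) x))
              = (rmap (k := k) (fun i => ↥(LinearMap.ker (combMap M Mmap i))) p.2) x := by
          intro p
          obtain ⟨m, hm⟩ := (IH' p).1 _ (hx1 p)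
          rw [← hm, hP' p.1 m]
        have h0 : (fun p : Σ j', arr i j' =>
            P p.1 ((rmap (k := k) (fun i => ↥(LinearMap.ker (combMap M Mmap i))) p.2) x))
            ∈ LinearMap.range (combMap M Mmap i) := by
          refine (Submodule.Quotient.mk_eq_zero _).mp ?_
          exact congrFun hx ⟨i, QPath.nil i⟩
        obtain ⟨m, hm⟩ := h0
        set κ : ↥(LinearMap.ker (combMap M Mmap i)) :=
          x ⟨i, QPath.nil i⟩ - f i m with hκ
        refine ⟨m + κ.1, funext fun q => ?_⟩
        obtain ⟨i', p⟩ := q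
        cases p with
        | nil =>
          show f i (m + κ.1) = x ⟨i, QPath.nil i⟩
          have e3 : f i κ.1 = κ := LinearMap.congr_fun (hf i) κ
          rw [map_add, e3, hκ]
          abel
        | cons a q2 =>
          have hz : Mmap i _ a κ.1 = 0 := congrFun (LinearMap.mem_ker.mp κ.2) ⟨_, a⟩
          have hmm : Mmap i _ a m
              = P _ ((rmap (k := k) (fun i => ↥(LinearMap.ker (combMap M Mmap i))) a) x) :=
            congrFun hm ⟨_, a⟩
          have hMa : Mmap i _ a (m + κ.1)
              = P _ ((rmap (k := k) (fun i => ↥(LinearMap.ker (combMap M Mmap i))) a) x) := by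
            rw [map_add, hz, hmm, add_zero]
          show f i' (pathMap Mmap q2 (Mmap i _ a (m + κ.1))) = x ⟨i', QPath.cons a q2⟩
          rw [hMa]
          exact congrFun (hx3 ⟨_, a⟩) ⟨i', q2⟩
      · -- surjectivity
        intro y
        choose xa hxa using fun p : Σ j', arr i j' =>
          (IH' p).2 ((rmap (k := k) (fun i => (∀ p : Σ j', arr i j', M p.1) ⧸
            LinearMap.range (combMap M Mmap i)) p.2) y)
        obtain ⟨v, hv⟩ := Submodule.mkQ_surjective (LinearMap.range (combMap M Mmap i))
          (y ⟨i, QPath.nil i⟩ - Submodule.Quotient.mk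
            (fun p : Σ j', arr i j' => P p.1 (xa p)))
        refine ⟨extendPath (fun p => xa p + ι p.1 (v p)), funext fun q => ?_⟩
        have hshift : ∀ p : Σ j', arr i j',
            (rmap (k := k) (fun i => ↥(LinearMap.ker (combMap M Mmap i))) p.2)
              (extendPath (fun p => xa p + ι p.1 (v p)))
              = xa p + ι p.1 (v p) := by
          intro p; funext q; rfl
        obtain ⟨i', p⟩ := q
        cases p with
        | nil =>
          show (LinearMap.range (combMap M Mmap i)).mkQ
              (fun p : Σ j', arr i j' =>
                P p.1 ((rmap (k := k) (fun i => ↥(LinearMap.ker (combMap M Mmap i))) p.2)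
                  (extendPath (fun p => xa p + ι p.1 (v p))))) = y ⟨i, QPath.nil i⟩
          have e1 : (fun p : Σ j', arr i j' =>
              P p.1 ((rmap (k := k) (fun i => ↥(LinearMap.ker (combMap M Mmap i))) p.2)
                (extendPath (fun p => xa p + ι p.1 (v p)))))
              = (fun p : Σ j', arr i j' => P p.1 (xa p)) + v := by
            funext p
            rw [hshift p, map_add, hP' p.1 (v p)]
            rfl
          rw [e1, map_add, hv, Submodule.mkQ_apply]
          abel
        | cons a q2 =>
          show h i' ((rpathMap (k := k) (fun i => ↥(LinearMap.ker (combMap M Mmap i))) q2)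
              ((rmap (k := k) (fun i => ↥(LinearMap.ker (combMap M Mmap i))) a)
                (extendPath (fun p => xa p + ι p.1 (v p))))) = y ⟨i', QPath.cons a q2⟩
          rw [hshift ⟨_, a⟩, map_add, hrι q2 (v ⟨_, a⟩), map_add, hhι, add_zero]
          exact congrFun (hxa ⟨_, a⟩) ⟨i', q2⟩
  refine ⟨ι, π, hcomm1, hcomm2, hinj,
    fun j => (key2 (B + 1) j (Nat.sub_le _ _)).2, fun j => ?_⟩
  apply le_antisymm
  · rintro _ ⟨m, rfl⟩
    exact LinearMap.mem_ker.mpr (hπι j m)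
  · intro x hx
    exact (key2 (B + 1) j (Nat.sub_le _ _)).1 x (LinearMap.mem_ker.mp hx)
end
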